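/- arXiv:1609.02762 — 2 statements merged into one kernel-verified Lean document; each statement's English description precedes it below -/
import Mathlib

section
/- Let p = Σ_α β_α x^α be a real polynomial in n variables of total degree at most d (d ≥ 0). Then ‖p‖_{R[x]} ≤ 3^{d+1} · max_{x ∈ [−1,1]^n} |p(x)|. -/
/-- The coefficient norm `‖p‖_{R[x]}`: the maximum (here: supremum) over multi-indices `α` with
`|α| ≤ deg p` of `|β_α| / binom(|α|, α)`, where `β_α` is the coefficient of `x^α` in `p` and
`binom(|α|, α) = |α|!/(α₁!⋯α_n!)` is the multinomial coefficient. -/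
noncomputable def coeffNorm {N : ℕ} (p : MvPolynomial (Fin N) ℝ) : ℝ :=
  sSup ((fun α : Fin N →₀ ℕ =>
      |MvPolynomial.coeff α p| / (Nat.multinomial Finset.univ α : ℝ)) ''
    {α : Fin N →₀ ℕ | ∑ i, α i ≤ p.totalDegree})

/-!
Expand `p` in the tensor Chebyshev basis, `p = ∑_γ a_γ ∏ᵢ T_{γᵢ}(xᵢ)`. The coefficients are
computed exactly by Gauss–Chebyshev quadrature on a grid of nodes in `[-1,1]ⁿ`, so
`|a_γ| ≤ 2^{#{i | γᵢ ≠ 0}} · sup |p|`, and `a_γ = 0` unless `|γ| ≤ d`. Reading off the monomial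
coefficient, `β_α = ∑_γ a_γ ∏ᵢ [xᵢ^{αᵢ}] T_{γᵢ}`; inserting the factor `2^{d - |γ|} ≥ 1` makes the
sum over `γ` split into a product of one-variable series `∑_g |[x^a] T_g| 2^{-g} ≤ (4/3)^{a+1}`,
a bound that follows from the three-term recurrence. The result is
`|β_α| ≤ 2^d (8/3)^s (4/3)^{|α|} sup |p|` with `s` the number of variables occurring in `x^α`, and
`2^d (8/3)^s (4/3)^{|α|} ≤ 3^{d+1} s! ≤ 3^{d+1} binom(|α|, α)`.
-/

open Finset Real Polynomial Polynomial.Chebyshev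

noncomputable def chebNode (N j : ℕ) : ℝ := cos ((2 * j + 1) / (2 * N) * π)

noncomputable def chebWeight (g : ℕ) : ℝ := if g = 0 then 1 else 2

noncomputable def chebNodeWeight (N g j : ℕ) : ℝ := chebWeight g / N * (T ℝ g).eval (chebNode N j)

/-- The `g`-th Chebyshev coefficient of `q`, computed by quadrature on the `N` zeros of `T_N`;
it is exact when `deg q < N` (`sum_discreteChebCoeff_smul_T`). -/
noncomputable def discreteChebCoeff (N g : ℕ) : ℝ[X] →ₗ[ℝ] ℝ where
  toFun q := ∑ j ∈ range N, q.eval (chebNode N j) * chebNodeWeight N g j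
  map_add' q r := by simp only [eval_add, add_mul, sum_add_distrib]
  map_smul' c q := by simp only [eval_smul, smul_eq_mul, mul_assoc, mul_sum, RingHom.id_apply]

lemma chebWeight_pos (g : ℕ) : 0 < chebWeight g := by
  unfold chebWeight
  split_ifs <;> norm_num

lemma chebWeight_le_two (g : ℕ) : chebWeight g ≤ 2 := by
  unfold chebWeight
  split_ifs <;> norm_num

lemma chebNode_mem_Icc (N j : ℕ) : chebNode N j ∈ Set.Icc (-1 : ℝ) 1 :=
  ⟨neg_one_le_cos _, cos_le_one _⟩

lemma chebNode_one_zero : chebNode 1 0 = 0 := by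
  simp [chebNode, ← div_eq_inv_mul]

lemma abs_eval_T_chebNode_le_one (N j : ℕ) (g : ℤ) : |(T ℝ g).eval (chebNode N j)| ≤ 1 := by
  rw [chebNode, T_real_cos]
  exact abs_cos_le_one _

lemma sum_eval_T_chebNode {N : ℕ} {m : ℤ} (hN : N ≠ 0) (hm : m.natAbs < 2 * N) :
    ∑ j ∈ range N, (T ℝ m).eval (chebNode N j) = if m = 0 then (N : ℝ) else 0 := by
  have hsum : ∑ j ∈ range N, (T ℝ m).eval (chebNode N j) = N / π * sumZeroes N (T ℝ m) := by
    rw [sumZeroes, ← mul_assoc, div_mul_div_cancel₀ pi_ne_zero, div_self (by simpa), one_mul]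
    rfl
  rw [hsum]
  split_ifs with h
  · rw [h, sumZeroes_T_zero hN, div_mul_cancel₀ _ pi_ne_zero]
  · rw [sumZeroes_T_of_not_dvd fun hdvd => h ?_, mul_zero]
    exact Int.eq_zero_of_dvd_of_natAbs_lt_natAbs hdvd (by simpa [Int.natAbs_mul] using hm)

lemma discreteChebCoeff_T {N g k : ℕ} (hg : g < N) (hk : k < N) :
    discreteChebCoeff N g (T ℝ k) = if g = k then 1 else 0 := by
  have hN : N ≠ 0 := by omega
  have hprod : ∀ j, (T ℝ k).eval (chebNode N j) * chebNodeWeight N g j = chebWeight g / (2 * N) *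
      ((T ℝ (k + g : ℤ)).eval (chebNode N j) + (T ℝ (k - g : ℤ)).eval (chebNode N j)) := by
    intro j
    rw [chebNodeWeight, ← eval_add, ← T_mul_T]
    simp only [eval_mul, eval_ofNat]
    ring
  simp only [discreteChebCoeff, LinearMap.coe_mk, AddHom.coe_mk, hprod, ← mul_sum, sum_add_distrib]
  rw [sum_eval_T_chebNode hN (by omega), sum_eval_T_chebNode hN (by omega)]
  rcases eq_or_ne g k with rfl | hgk
  · rcases eq_or_ne g 0 with rfl | hg0
    · norm_num [chebWeight]
      field_simp
      ring
    · rw [if_neg (by omega), if_pos (by omega), if_pos rfl, chebWeight, if_neg hg0, zero_add]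
      field_simp
  · rw [if_neg (by omega), if_neg (by omega), if_neg hgk]
    ring

lemma exists_eq_sum_smul_T {K : Type*} [Field K] [NeZero (2 : K)] {m : ℕ} {q : K[X]}
    (hq : q ∈ degreeLT K m) : ∃ c : ℕ → K, ∑ k ∈ range m, c k • T K k = q := by
  rwa [← Sequence.span_degreeLT (chebyshevTsequence K) (by simp),
    show Set.Iio m = (range m : Set ℕ) by simp,
    Submodule.mem_span_image_finset_iff_exists_fun'] at hq

lemma discreteChebCoeff_eq_zero_of_mem_degreeLT {N m g : ℕ} {q : ℝ[X]} (hq : q ∈ degreeLT ℝ m)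
    (hmg : m ≤ g) (hg : g < N) : discreteChebCoeff N g q = 0 := by
  obtain ⟨c, rfl⟩ := exists_eq_sum_smul_T hq
  simp only [map_sum, map_smul, smul_eq_mul]
  refine sum_eq_zero fun k hk => ?_
  rw [mem_range] at hk
  rw [discreteChebCoeff_T hg (by omega), if_neg (by omega), mul_zero]

lemma sum_discreteChebCoeff_smul_T {N : ℕ} {q : ℝ[X]} (hq : q ∈ degreeLT ℝ N) :
    ∑ g ∈ range N, discreteChebCoeff N g q • T ℝ g = q := by
  obtain ⟨c, rfl⟩ := exists_eq_sum_smul_T hq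
  refine sum_congr rfl fun g hg => ?_
  simp only [map_sum, map_smul, smul_eq_mul]
  rw [sum_eq_single g]
  · rw [discreteChebCoeff_T (mem_range.mp hg) (mem_range.mp hg), if_pos rfl, mul_one]
  · intro k hk hkg
    rw [discreteChebCoeff_T (mem_range.mp hg) (mem_range.mp hk), if_neg (Ne.symm hkg), mul_zero]
  · exact fun h => absurd hg h

lemma sum_discreteChebCoeff_mul_coeff_T {N : ℕ} {q : ℝ[X]} (hq : q ∈ degreeLT ℝ N) (a : ℕ) :
    ∑ g ∈ range N, discreteChebCoeff N g q * (T ℝ g).coeff a = q.coeff a := by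
  conv_rhs => rw [← sum_discreteChebCoeff_smul_T hq]
  simp only [finsetSum_coeff, coeff_smul, smul_eq_mul]

lemma sum_discreteChebCoeff_one_mul_coeff_T (q : ℝ[X]) :
    ∑ g ∈ range 1, discreteChebCoeff 1 g q * (T ℝ g).coeff 0 = q.coeff 0 := by
  simp [discreteChebCoeff, chebNodeWeight, chebWeight, chebNode_one_zero, coeff_zero_eq_eval_zero]

lemma X_pow_mem_degreeLT {R : Type*} [Semiring R] [Nontrivial R] {h m : ℕ} (hm : h < m) :
    (X ^ h : R[X]) ∈ degreeLT R m := by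
  rw [mem_degreeLT, degree_X_pow]
  exact_mod_cast hm

lemma coeff_T_add_two {R : Type*} [CommRing R] (m a : ℕ) :
    (T R (m + 2 : ℕ)).coeff a = 2 * (X * T R (m + 1 : ℕ)).coeff a - (T R m).coeff a := by
  push_cast
  rw [T_add_two, coeff_sub, mul_assoc, coeff_ofNat_mul]

lemma sum_range_add_two {M : Type*} [AddCommMonoid M] (f : ℕ → M) (N : ℕ) :
    ∑ g ∈ range (N + 2), f g = f 0 + f 1 + ∑ m ∈ range N, f (m + 2) := by
  rw [sum_range_succ', sum_range_succ', zero_add, add_comm, add_assoc, add_comm _ (f 1)]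

lemma sum_range_le_of_sum_range_add_two_le {f : ℕ → ℝ} (hf : ∀ g, 0 ≤ f g) {B : ℝ}
    (h : ∀ N, ∑ g ∈ range (N + 2), f g ≤ B + (∑ g ∈ range N, f g) / 4) (N : ℕ) :
    ∑ g ∈ range N, f g ≤ 4 / 3 * B := by
  have hmono : ∑ g ∈ range N, f g ≤ ∑ g ∈ range (N + 2), f g :=
    sum_le_sum_of_subset_of_nonneg (range_subset_range.mpr (by omega)) fun g _ _ => hf g
  linarith [h N]

lemma sum_abs_coeff_T_succ_le (a N : ℕ) :
    ∑ g ∈ range (N + 2), |(T ℝ g).coeff (a + 1)| * (1 / 2) ^ g ≤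
      ∑ g ∈ range (N + 1), |(T ℝ g).coeff a| * (1 / 2) ^ g +
        (∑ g ∈ range N, |(T ℝ g).coeff (a + 1)| * (1 / 2) ^ g) / 4 := by
  have hterm : ∀ m : ℕ, |(T ℝ (m + 2 : ℕ)).coeff (a + 1)| * (1 / 2) ^ (m + 2) ≤
      |(T ℝ (m + 1 : ℕ)).coeff a| * (1 / 2) ^ (m + 1) +
        |(T ℝ m).coeff (a + 1)| * (1 / 2) ^ m / 4 := by
    intro m
    rw [coeff_T_add_two, coeff_X_mul]
    calc _ ≤ (2 * |(T ℝ (m + 1 : ℕ)).coeff a| + |(T ℝ m).coeff (a + 1)|) * (1 / 2) ^ (m + 2) := by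
          gcongr
          exact (abs_sub _ _).trans_eq (by rw [abs_mul, abs_two])
      _ = _ := by ring
  have hlow : |(T ℝ (0 : ℕ)).coeff (a + 1)| * (1 / 2) ^ 0 +
      |(T ℝ (1 : ℕ)).coeff (a + 1)| * (1 / 2) ^ 1 ≤ |(T ℝ (0 : ℕ)).coeff a| * (1 / 2) ^ 0 := by
    rcases a with _ | a <;> norm_num [coeff_X, coeff_one]
  calc _ = _ := sum_range_add_two _ N
    _ ≤ |(T ℝ (0 : ℕ)).coeff a| * (1 / 2) ^ 0 + ∑ m ∈ range N,
        (|(T ℝ (m + 1 : ℕ)).coeff a| * (1 / 2) ^ (m + 1) +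
          |(T ℝ m).coeff (a + 1)| * (1 / 2) ^ m / 4) :=
      add_le_add hlow (sum_le_sum fun m _ => hterm m)
    _ = _ := by
      rw [sum_add_distrib, sum_range_succ' _ N, sum_div]
      ring

lemma sum_abs_coeff_T_le (a N : ℕ) :
    ∑ g ∈ range N, |(T ℝ g).coeff a| * (1 / 2) ^ g ≤ (4 / 3) ^ (a + 1) := by
  induction a generalizing N with
  | zero =>
    refine (sum_range_le_of_sum_range_add_two_le (fun g => by positivity) (fun N => ?_) N).trans_eq
      (by ring : 4 / 3 * (1 : ℝ) = _)
    have hterm : ∀ m : ℕ, |(T ℝ (m + 2 : ℕ)).coeff 0| * (1 / 2) ^ (m + 2) =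
        |(T ℝ m).coeff 0| * (1 / 2) ^ m / 4 := by
      intro m
      rw [coeff_T_add_two, mul_coeff_zero, coeff_X_zero]
      simp only [zero_mul, mul_zero, zero_sub, abs_neg, pow_add]
      ring
    rw [sum_range_add_two, sum_congr rfl fun m _ => hterm m, sum_div]
    simp
  | succ a ih =>
    refine (sum_range_le_of_sum_range_add_two_le (fun g => by positivity) (fun N => ?_) N).trans_eq
      (by ring : 4 / 3 * (4 / 3 : ℝ) ^ (a + 1) = _)
    exact (sum_abs_coeff_T_succ_le a N).trans (by gcongr; exact ih _)

lemma sum_chebWeight_mul_abs_coeff_T_le (a N : ℕ) :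
    ∑ g ∈ range N, chebWeight g * |(T ℝ g).coeff a| * (1 / 2) ^ g ≤ 8 / 3 * (4 / 3) ^ a := by
  calc _ ≤ ∑ g ∈ range N, 2 * (|(T ℝ g).coeff a| * (1 / 2) ^ g) :=
        sum_le_sum fun g _ => by
          rw [mul_assoc]
          exact mul_le_mul_of_nonneg_right (chebWeight_le_two g) (by positivity)
    _ ≤ 2 * (4 / 3) ^ (a + 1) := by rw [← mul_sum]; gcongr; exact sum_abs_coeff_T_le a N
    _ = _ := by ring

lemma one_le_two_pow_mul_half_pow {s d : ℕ} (h : s ≤ d) : 1 ≤ (2 : ℝ) ^ d * (1 / 2) ^ s := by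
  obtain ⟨e, rfl⟩ := Nat.exists_eq_add_of_le h
  rw [pow_add, mul_right_comm, ← mul_pow]
  norm_num
  exact one_le_pow₀ (by norm_num)

section Multivariate

variable {n : ℕ}

lemma nonneg_of_abs_eval_le {p : MvPolynomial (Fin n) ℝ} {M : ℝ}
    (hM : ∀ x ∈ Set.Icc (fun _ => (-1 : ℝ)) (fun _ => 1), |MvPolynomial.eval x p| ≤ M) : 0 ≤ M :=
  (abs_nonneg _).trans (hM 0 ⟨fun _ => by simp, fun _ => by simp⟩)

/-- The tensor-product Chebyshev coefficient `a_γ` of `p`, by quadrature with `N i` nodes in the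
variable `i`. -/
noncomputable def chebTransform (N : Fin n → ℕ) (p : MvPolynomial (Fin n) ℝ) (γ : Fin n → ℕ) : ℝ :=
  ∑ j ∈ Fintype.piFinset (fun i => range (N i)),
    MvPolynomial.eval (fun i => chebNode (N i) (j i)) p * ∏ i, chebNodeWeight (N i) (γ i) (j i)

lemma chebTransform_eq_sum (N : Fin n → ℕ) (p : MvPolynomial (Fin n) ℝ) (γ : Fin n → ℕ) :
    chebTransform N p γ =
      ∑ η ∈ p.support, p.coeff η * ∏ i, discreteChebCoeff (N i) (γ i) (X ^ η i) := by
  simp only [chebTransform, MvPolynomial.eval_eq', sum_mul]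
  rw [sum_comm]
  refine sum_congr rfl fun η _ => ?_
  simp only [discreteChebCoeff, LinearMap.coe_mk, AddHom.coe_mk, eval_pow, eval_X, prod_univ_sum,
    mul_sum, mul_assoc, prod_mul_distrib]

lemma coeff_eq_sum_chebTransform {N : Fin n → ℕ} {p : MvPolynomial (Fin n) ℝ} {α : Fin n →₀ ℕ}
    (hrep : ∀ η ∈ p.support, ∀ i, ∑ g ∈ range (N i),
      discreteChebCoeff (N i) g (X ^ η i) * (T ℝ g).coeff (α i) = (X ^ η i : ℝ[X]).coeff (α i)) :
    p.coeff α = ∑ γ ∈ Fintype.piFinset (fun i => range (N i)),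
      chebTransform N p γ * ∏ i, (T ℝ (γ i)).coeff (α i) := by
  simp only [chebTransform_eq_sum, sum_mul]
  rw [sum_comm]
  have hdelta : ∀ η ∈ p.support, ∑ γ ∈ Fintype.piFinset (fun i => range (N i)),
      p.coeff η * (∏ i, discreteChebCoeff (N i) (γ i) (X ^ η i)) * ∏ i, (T ℝ (γ i)).coeff (α i) =
      if η = α then p.coeff α else 0 := by
    intro η hη
    simp only [mul_assoc, ← mul_sum, ← prod_mul_distrib]
    rw [← prod_univ_sum (t := fun i => range (N i))
      (f := fun i g => discreteChebCoeff (N i) g (X ^ η i) * (T ℝ g).coeff (α i))]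
    simp only [hrep η hη, coeff_X_pow, prod_boole, mem_univ, forall_const, ← DFunLike.ext_iff,
      eq_comm (a := α)]
    split_ifs with h
    · rw [h, mul_one]
    · rw [mul_zero]
  rw [sum_congr rfl hdelta, sum_ite_eq']
  split_ifs with h
  · rfl
  · exact MvPolynomial.notMem_support_iff.mp h

lemma chebTransform_eq_zero_of_totalDegree_lt {N : Fin n → ℕ} {p : MvPolynomial (Fin n) ℝ}
    {γ : Fin n → ℕ} (hγ : ∀ i, γ i < N i) (hp : p.totalDegree < ∑ i, γ i) :
    chebTransform N p γ = 0 := by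
  rw [chebTransform_eq_sum]
  refine sum_eq_zero fun η hη => ?_
  obtain ⟨i, hi⟩ : ∃ i, η i < γ i := by
    by_contra! h
    have hη_le : ∑ i, η i ≤ p.totalDegree := by
      simpa [Finsupp.sum_fintype] using MvPolynomial.le_totalDegree hη
    have := sum_le_sum fun i (_ : i ∈ univ) => h i
    omega
  rw [prod_eq_zero (mem_univ i) (discreteChebCoeff_eq_zero_of_mem_degreeLT
    (X_pow_mem_degreeLT (Nat.lt_succ_self _)) hi (hγ i)), mul_zero]

lemma abs_chebTransform_le {N : Fin n → ℕ} {p : MvPolynomial (Fin n) ℝ} {M : ℝ}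
    (hN : ∀ i, N i ≠ 0)
    (hM : ∀ x ∈ Set.Icc (fun _ => (-1 : ℝ)) (fun _ => 1), |MvPolynomial.eval x p| ≤ M)
    (γ : Fin n → ℕ) : |chebTransform N p γ| ≤ M * ∏ i, chebWeight (γ i) := by
  have hnodeWeight : ∀ i j, |chebNodeWeight (N i) (γ i) j| ≤ chebWeight (γ i) / N i := by
    intro i j
    have : 0 ≤ chebWeight (γ i) / N i := div_nonneg (chebWeight_pos _).le (Nat.cast_nonneg _)
    rw [chebNodeWeight, abs_mul, abs_of_nonneg this]
    exact mul_le_of_le_one_right this (abs_eval_T_chebNode_le_one _ _ _)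
  have hnode : ∀ j : Fin n → ℕ, (fun i => chebNode (N i) (j i)) ∈
      Set.Icc (fun _ => (-1 : ℝ)) (fun _ => 1) :=
    fun j => ⟨fun i => (chebNode_mem_Icc _ _).1, fun i => (chebNode_mem_Icc _ _).2⟩
  have hM0 := nonneg_of_abs_eval_le hM
  calc |chebTransform N p γ|
      ≤ ∑ j ∈ Fintype.piFinset (fun i => range (N i)), M * ∏ i, (chebWeight (γ i) / N i) := by
        refine (abs_sum_le_sum_abs _ _).trans (sum_le_sum fun j _ => ?_)
        rw [abs_mul, abs_prod]
        exact mul_le_mul (hM _ (hnode j)) (prod_le_prod (fun i _ => abs_nonneg _)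
          fun i _ => hnodeWeight i (j i)) (prod_nonneg fun i _ => abs_nonneg _) hM0
    _ = M * ∏ i, chebWeight (γ i) := by
        rw [sum_const, Fintype.card_piFinset, nsmul_eq_mul, Nat.cast_prod, mul_left_comm,
          ← prod_mul_distrib]
        refine congrArg (M * ·) (prod_congr rfl fun i _ => ?_)
        rw [card_range, mul_div_cancel₀ _ (Nat.cast_ne_zero.mpr (hN i))]

lemma abs_coeff_le_of_chebyshev {N : Fin n → ℕ} {p : MvPolynomial (Fin n) ℝ} {α : Fin n →₀ ℕ}
    {d : ℕ} {M : ℝ} (hN : ∀ i, N i ≠ 0) (hdeg : p.totalDegree ≤ d)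
    (hM : ∀ x ∈ Set.Icc (fun _ => (-1 : ℝ)) (fun _ => 1), |MvPolynomial.eval x p| ≤ M)
    (hrep : ∀ η ∈ p.support, ∀ i, ∑ g ∈ range (N i),
      discreteChebCoeff (N i) g (X ^ η i) * (T ℝ g).coeff (α i) = (X ^ η i : ℝ[X]).coeff (α i)) :
    |p.coeff α| ≤ M * 2 ^ d *
      ∏ i, ∑ g ∈ range (N i), chebWeight g * |(T ℝ g).coeff (α i)| * (1 / 2) ^ g := by
  have hM0 := nonneg_of_abs_eval_le hM
  rw [coeff_eq_sum_chebTransform hrep, prod_univ_sum, mul_sum]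
  refine (abs_sum_le_sum_abs _ _).trans (sum_le_sum fun γ hγ => ?_)
  have hγN : ∀ i, γ i < N i := fun i => mem_range.mp (Fintype.mem_piFinset.mp hγ i)
  by_cases hγd : d < ∑ i, γ i
  · rw [chebTransform_eq_zero_of_totalDegree_lt hγN (by omega), zero_mul, abs_zero]
    exact mul_nonneg (by positivity)
      (prod_nonneg fun i _ => by have := chebWeight_pos (γ i); positivity)
  calc |chebTransform N p γ * ∏ i, (T ℝ (γ i)).coeff (α i)|
      ≤ M * (∏ i, chebWeight (γ i)) * ∏ i, |(T ℝ (γ i)).coeff (α i)| := by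
        rw [abs_mul, abs_prod]
        exact mul_le_mul_of_nonneg_right (abs_chebTransform_le hN hM γ)
          (prod_nonneg fun i _ => abs_nonneg _)
    _ ≤ M * (∏ i, chebWeight (γ i)) * (∏ i, |(T ℝ (γ i)).coeff (α i)|) *
        (2 ^ d * (1 / 2) ^ ∑ i, γ i) := by
        refine le_mul_of_one_le_right ?_ (one_le_two_pow_mul_half_pow (by omega))
        exact mul_nonneg (mul_nonneg hM0 (prod_nonneg fun i _ => (chebWeight_pos _).le))
          (prod_nonneg fun i _ => abs_nonneg _)
    _ = M * 2 ^ d * ∏ i, (chebWeight (γ i) * |(T ℝ (γ i)).coeff (α i)| * (1 / 2) ^ γ i) := by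
        rw [prod_mul_distrib, prod_mul_distrib, prod_pow_eq_pow_sum]
        ring

end Multivariate

lemma pow_le_three_mul_factorial (s : ℕ) : (64 / 27 : ℝ) ^ s ≤ 3 * s.factorial := by
  induction s with
  | zero => norm_num
  | succ s ih =>
    rcases s with _ | _ | s
    · norm_num
    · norm_num [Nat.factorial]
    · rw [pow_succ, Nat.factorial_succ, Nat.cast_mul]
      have : (64 / 27 : ℝ) ≤ (s + 2 + 1 : ℕ) := by
        push_cast
        linarith [(Nat.cast_nonneg s : (0 : ℝ) ≤ s)]
      nlinarith [(Nat.cast_pos.mpr (Nat.factorial_pos (s + 2)) : (0 : ℝ) < _)]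

lemma card_filter_ne_zero_le_sum {ι : Type*} (s : Finset ι) (f : ι → ℕ) :
    #{i ∈ s | f i ≠ 0} ≤ ∑ i ∈ s, f i := by
  rw [card_filter]
  exact sum_le_sum fun i _ => by split_ifs <;> omega

lemma factorial_card_filter_ne_zero_le_multinomial {ι : Type*} [DecidableEq ι] (s : Finset ι)
    (f : ι → ℕ) : (#{i ∈ s | f i ≠ 0}).factorial ≤ Nat.multinomial s f := by
  induction s using Finset.induction_on with
  | empty => simp
  | insert a s ha ih =>
    rw [Nat.multinomial_insert ha, filter_insert]
    by_cases hfa : f a = 0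
    · simpa [hfa] using ih
    · have hcard := card_filter_ne_zero_le_sum s f
      rw [if_pos hfa, card_insert_of_notMem (by simp [ha]), Nat.factorial_succ]
      refine Nat.mul_le_mul ?_ ih
      calc #{i ∈ s | f i ≠ 0} + 1 ≤ (∑ i ∈ s, f i + 1).choose (∑ i ∈ s, f i) := by
            rw [Nat.choose_succ_self_right]; omega
        _ ≤ (f a + ∑ i ∈ s, f i).choose (∑ i ∈ s, f i) := Nat.choose_le_choose _ (by omega)
        _ = _ := Nat.choose_symm_add.symm

lemma two_pow_mul_le_three_pow_mul_factorial {s k d : ℕ} (hsk : s ≤ k) (hkd : k ≤ d) :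
    (2 : ℝ) ^ d * ((8 / 3) ^ s * (4 / 3) ^ k) ≤ 3 ^ (d + 1) * s.factorial := by
  obtain ⟨t, rfl⟩ := Nat.exists_eq_add_of_le hsk
  obtain ⟨e, rfl⟩ := Nat.exists_eq_add_of_le hkd
  have h1 : (2 : ℝ) ^ e ≤ 3 ^ e := pow_le_pow_left₀ (by norm_num) (by norm_num) e
  have h2 : (8 / 3 : ℝ) ^ t ≤ 3 ^ t := pow_le_pow_left₀ (by norm_num) (by norm_num) t
  have h3 := pow_le_three_mul_factorial s
  calc (2 : ℝ) ^ (s + t + e) * ((8 / 3) ^ s * (4 / 3) ^ (s + t))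
      = 3 ^ s * (64 / 27) ^ s * (8 / 3) ^ t * 2 ^ e := by
        rw [show (3 : ℝ) ^ s * (64 / 27) ^ s = 2 ^ s * (8 / 3) ^ s * (4 / 3) ^ s by
            rw [← mul_pow, ← mul_pow, ← mul_pow]; norm_num,
          show (8 / 3 : ℝ) ^ t = 2 ^ t * (4 / 3) ^ t by rw [← mul_pow]; norm_num]
        ring
    _ ≤ 3 ^ s * (3 * s.factorial) * 3 ^ t * 3 ^ e := by gcongr
    _ = 3 ^ (s + t + e + 1) * s.factorial := by ring

lemma abs_coeff_le_two_pow_mul {n d : ℕ} {p : MvPolynomial (Fin n) ℝ} {α : Fin n →₀ ℕ} {M : ℝ}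
    (hdeg : p.totalDegree ≤ d)
    (hM : ∀ x ∈ Set.Icc (fun _ => (-1 : ℝ)) (fun _ => 1), |MvPolynomial.eval x p| ≤ M) :
    |p.coeff α| ≤ M * (2 ^ d * ((8 / 3) ^ #{i | α i ≠ 0} * (4 / 3) ^ ∑ i, α i)) := by
  -- A variable absent from `x^α` only needs its constant coefficient, which the single node
  -- `chebNode 1 0 = 0` reads off exactly; its factor in the product bound is then `1`.
  set N : Fin n → ℕ := fun i => if α i = 0 then 1 else d + 1 with hN_def
  have hN : ∀ i, N i ≠ 0 := fun i => by simp only [hN_def]; split_ifs <;> omega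
  have hrep : ∀ η ∈ p.support, ∀ i, ∑ g ∈ range (N i),
      discreteChebCoeff (N i) g (X ^ η i) * (T ℝ g).coeff (α i) = (X ^ η i : ℝ[X]).coeff (α i) := by
    intro η hη i
    by_cases hαi : α i = 0
    · simp only [hN_def, if_pos hαi, hαi]
      exact sum_discreteChebCoeff_one_mul_coeff_T _
    · simp only [hN_def, if_neg hαi]
      refine sum_discreteChebCoeff_mul_coeff_T (X_pow_mem_degreeLT ?_) _
      have := (MvPolynomial.monomial_le_degreeOf i hη).trans (p.degreeOf_le_totalDegree i)
      omega
  have hweight : ∀ i, ∑ g ∈ range (N i), chebWeight g * |(T ℝ g).coeff (α i)| * (1 / 2) ^ g ≤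
      (8 / 3) ^ (if α i = 0 then 0 else 1) * (4 / 3) ^ α i := by
    intro i
    by_cases hαi : α i = 0
    · simp [hN_def, hαi, chebWeight]
    · simpa [hN_def, hαi] using sum_chebWeight_mul_abs_coeff_T_le (α i) (d + 1)
  calc |p.coeff α|
      ≤ M * 2 ^ d * ∏ i, ((8 / 3) ^ (if α i = 0 then 0 else 1) * (4 / 3) ^ α i) :=
        (abs_coeff_le_of_chebyshev hN hdeg hM hrep).trans <| mul_le_mul_of_nonneg_left
          (prod_le_prod (fun i _ => sum_nonneg fun g _ => by have := chebWeight_pos g; positivity)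
            fun i _ => hweight i) (by have := nonneg_of_abs_eval_le hM; positivity)
    _ = M * (2 ^ d * ((8 / 3) ^ #{i | α i ≠ 0} * (4 / 3) ^ ∑ i, α i)) := by
        rw [prod_mul_distrib, prod_pow_eq_pow_sum, prod_pow_eq_pow_sum, card_filter]
        simp only [ite_not]
        ring

lemma abs_coeff_le_three_pow_mul_multinomial {n d : ℕ} {p : MvPolynomial (Fin n) ℝ}
    {α : Fin n →₀ ℕ} {M : ℝ} (hdeg : p.totalDegree ≤ d) (hα : ∑ i, α i ≤ d)
    (hM : ∀ x ∈ Set.Icc (fun _ => (-1 : ℝ)) (fun _ => 1), |MvPolynomial.eval x p| ≤ M) :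
    |p.coeff α| ≤ 3 ^ (d + 1) * Nat.multinomial univ α * M := by
  have hM0 := nonneg_of_abs_eval_le hM
  calc |p.coeff α| ≤ M * (2 ^ d * ((8 / 3) ^ #{i | α i ≠ 0} * (4 / 3) ^ ∑ i, α i)) :=
        abs_coeff_le_two_pow_mul hdeg hM
    _ ≤ M * (3 ^ (d + 1) * (#{i | α i ≠ 0}).factorial) := mul_le_mul_of_nonneg_left
        (two_pow_mul_le_three_pow_mul_factorial (card_filter_ne_zero_le_sum univ α) hα) hM0
    _ ≤ M * (3 ^ (d + 1) * Nat.multinomial univ α) := by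
        gcongr
        exact_mod_cast factorial_card_filter_ne_zero_le_multinomial univ α
    _ = _ := by ring

/-- If `p` is a real polynomial in `n` variables of total degree at most `d`, then
`‖p‖_{R[x]} ≤ 3^{d+1} · max_{x ∈ [−1,1]^n} |p(x)|`. -/
theorem coeffNorm_le_pow_mul_sup_box (n d : ℕ) (p : MvPolynomial (Fin n) ℝ)
    (hdeg : p.totalDegree ≤ d) :
    coeffNorm p ≤ 3 ^ (d + 1) *
      sSup ((fun x : Fin n → ℝ => |MvPolynomial.eval x p|) ''
        Set.Icc (fun _ => (-1 : ℝ)) (fun _ => (1 : ℝ))) := by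
  set S := (fun x : Fin n → ℝ => |MvPolynomial.eval x p|) ''
    Set.Icc (fun _ => (-1 : ℝ)) (fun _ => (1 : ℝ))
  have hbdd : BddAbove S :=
    isCompact_Icc.bddAbove_image (MvPolynomial.continuous_eval p).abs.continuousOn
  have hM : ∀ x ∈ Set.Icc (fun _ => (-1 : ℝ)) (fun _ => 1), |MvPolynomial.eval x p| ≤ sSup S :=
    fun x hx => le_csSup hbdd ⟨x, hx, rfl⟩
  have hS0 : 0 ≤ sSup S := Real.sSup_nonneg (by rintro _ ⟨x, _, rfl⟩; exact abs_nonneg _)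
  refine Real.sSup_le ?_ (by positivity)
  rintro _ ⟨α, hα, rfl⟩
  rw [div_le_iff₀ (by exact_mod_cast Nat.multinomial_pos _ _)]
  exact (abs_coeff_le_three_pow_mul_multinomial hdeg (hα.trans hdeg) hM).trans_eq (by ring)
end

section
/- Let X ⊆ ℝⁿ and U ⊆ ℝᵐ be compact, β > 0, l : ℝⁿ×ℝᵐ → ℝ and f : ℝⁿ×ℝᵐ → ℝⁿ continuous, and let V : ℝⁿ → ℝ be continuously differentiable and satisfy the Bellman inequality l(x,u) − βV(x) + ∇V(x)·f(x,u) ≥ 0 for all (x,u) ∈ X×U. Then for every x₀ ∈ X and every admissible pair (x(·), u(·)) from x₀ — i.e., u : [0,∞) → U measurable and x : [0,∞) → ℝⁿ with x(t) = x₀ + ∫₀ᵗ f(x(s),u(s)) ds and x(t) ∈ X for all t ≥ 0 — one has V(x₀) ≤ ∫₀^∞ e^{−βt} l(x(t),u(t)) dt. In particular, V(x₀) ≤ V*(x₀) for all x₀ ∈ X, where V* is the value function of the discounted infinite-horizon optimal control problem. -/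
open RealInnerProductSpace MeasureTheory

/-- An admissible pair `(x(·), u(·))` from `x₀`: a measurable control `u` taking values in `U`
on `[0,∞)`, together with a trajectory `x` satisfying `x(t) = x₀ + ∫₀ᵗ f(x(s),u(s)) ds` and
`x(t) ∈ X` for all `t ≥ 0`. -/
def IsAdmissiblePair {n m : ℕ}
    (f : EuclideanSpace ℝ (Fin n) → EuclideanSpace ℝ (Fin m) → EuclideanSpace ℝ (Fin n))
    (X : Set (EuclideanSpace ℝ (Fin n))) (U : Set (EuclideanSpace ℝ (Fin m)))
    (x₀ : EuclideanSpace ℝ (Fin n))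
    (x : ℝ → EuclideanSpace ℝ (Fin n)) (u : ℝ → EuclideanSpace ℝ (Fin m)) : Prop :=
  Measurable u ∧ (∀ t, 0 ≤ t → u t ∈ U) ∧ (∀ t, 0 ≤ t → x t ∈ X) ∧
    ∀ t, 0 ≤ t → x t = x₀ + ∫ s in (0:ℝ)..t, f (x s) (u s)

/-- The discounted infinite-horizon cost `∫₀^∞ e^{−βt} l(x(t),u(t)) dt` of a trajectory. -/
noncomputable def trajCost {n m : ℕ} (β : ℝ)
    (l : EuclideanSpace ℝ (Fin n) → EuclideanSpace ℝ (Fin m) → ℝ)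
    (x : ℝ → EuclideanSpace ℝ (Fin n)) (u : ℝ → EuclideanSpace ℝ (Fin m)) : ℝ :=
  ∫ t in Set.Ioi (0:ℝ), Real.exp (-β * t) * l (x t) (u t)

/-!
Along an admissible pair, `ψ(t) = ∫₀ᵗ e^{-βs} l(x(s),u(s)) ds + e^{-βt} V(x(t))` is absolutely
continuous (the trajectory is Lipschitz because `f` is bounded on the compact set `X × U`), and by
the chain rule its derivative is, almost everywhere, `e^{-βt} (l − βV + ⟪∇V, f⟫)(x(t),u(t)) ≥ 0`.
Hence `V(x₀) = ψ(0) ≤ ψ(T)` for every `T`, and as `T → ∞` the boundary term `e^{-βT} V(x(T))`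
vanishes because `V` is bounded on `X`.
-/

open Set Filter Topology
open scoped NNReal

theorem integrableOn_Ioc_of_norm_le_of_not_integrableOn {E : Type*} [NormedAddCommGroup E]
    {G : ℝ → E} {C : ℝ} (hC : ∀ s, 0 < s → ‖G s‖ ≤ C)
    (hG : ∀ t, ¬ IntegrableOn G (Ioc 0 t) → AEStronglyMeasurable G (volume.restrict (Ioi t)))
    (t : ℝ) : IntegrableOn G (Ioc 0 t) := by
  have of_aesm : ∀ {r}, AEStronglyMeasurable G (volume.restrict (Ioc 0 r)) →
      IntegrableOn G (Ioc 0 r) := fun hr =>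
    .of_bound measure_Ioc_lt_top hr C
      (ae_restrict_of_forall_mem measurableSet_Ioc fun s hs => hC s hs.1)
  by_contra ht
  set B := {t | ¬ IntegrableOn G (Ioc 0 t)}
  have hBbdd : BddBelow B := ⟨0, fun s hs => not_lt.1 fun hs0 => hs (by simp [hs0.le])⟩
  set b := sInf B
  -- Below `b` the integrable pieces `(0, t]` exhaust `(0, b)`; above `b`, `hG` applies.
  have hbelow : AEStronglyMeasurable G (volume.restrict (Ioc 0 b)) := by
    have hlim : Tendsto (fun n : ℕ => b - 1 / (n + 1)) atTop (𝓝 b) := by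
      simpa using tendsto_one_div_add_atTop_nhds_zero_nat.const_sub b
    have hunion : ⋃ n : ℕ, Ioc 0 (b - 1 / (n + 1)) = Ioo 0 b := by
      rw [← Ioi_inter_Iio, ← iUnion_Iic_eq_Iio_of_lt_of_tendsto
        (fun n => sub_lt_self b (by positivity)) hlim, inter_iUnion]
      rfl
    rw [← Measure.restrict_congr_set Ioo_ae_eq_Ioc, ← hunion, aestronglyMeasurable_iUnion_iff]
    refine fun n => (not_not.1 (notMem_of_lt_csInf ?_ hBbdd)).aestronglyMeasurable
    have : (0 : ℝ) < 1 / (n + 1) := by positivity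
    linarith
  have habove : AEStronglyMeasurable G (volume.restrict (Ioi b)) := by
    obtain ⟨c, -, hc_lim, hcB⟩ := exists_seq_tendsto_sInf ⟨t, ht⟩ hBbdd
    have hunion : ⋃ n, Ioi (c n) = Ioi b := by
      ext s
      simp only [mem_iUnion, mem_Ioi]
      exact ⟨fun ⟨n, hn⟩ => (csInf_le hBbdd (hcB n)).trans_lt hn,
        fun hs => (hc_lim.eventually (gt_mem_nhds hs)).exists⟩
    rw [← hunion, aestronglyMeasurable_iUnion_iff]
    exact fun n => hG _ (hcB n)
  apply ht
  refine of_aesm ((aestronglyMeasurable_union_iff.2 ⟨hbelow, habove⟩).mono_set ?_)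
  exact fun s hs => (le_or_gt s b).imp (fun h => ⟨hs.1, h⟩) id

theorem AbsolutelyContinuousOnInterval.le_of_ae_hasDerivAt_nonneg {f f' : ℝ → ℝ} {a b : ℝ}
    (hab : a ≤ b) (hf : AbsolutelyContinuousOnInterval f a b)
    (hf' : ∀ᵐ t, t ∈ Ioo a b → HasDerivAt f (f' t) t ∧ 0 ≤ f' t) : f a ≤ f b := by
  have hderiv : 0 ≤ᵐ[volume.restrict (Icc a b)] deriv f := by
    rw [← Measure.restrict_congr_set Ioo_ae_eq_Icc]
    filter_upwards [ae_restrict_of_ae hf', ae_restrict_mem measurableSet_Ioo] with t ht hmem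
    obtain ⟨hd, hnn⟩ := ht hmem
    simpa [hd.deriv] using hnn
  linarith [hf.integral_deriv_eq_sub, intervalIntegral.integral_nonneg_of_ae_restrict hab hderiv]

section Trajectory

variable {E : Type*} [NormedAddCommGroup E] [NormedSpace ℝ E] {x G : ℝ → E} {x₀ : E}

theorem lipschitzOnWith_Ici_of_eq_add_integral {C : ℝ≥0} (hC : ∀ s, 0 < s → ‖G s‖ ≤ C)
    (hG : ∀ t, IntegrableOn G (Ioc 0 t)) (hx : ∀ t, 0 ≤ t → x t = x₀ + ∫ s in 0..t, G s) :
    LipschitzOnWith C x (Ici 0) := by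
  have hGi : ∀ r, 0 ≤ r → IntervalIntegrable G volume 0 r := fun r hr =>
    (intervalIntegrable_iff_integrableOn_Ioc_of_le hr).2 (hG r)
  refine .of_dist_le_mul fun s (hs : 0 ≤ s) t (ht : 0 ≤ t) => ?_
  rw [dist_eq_norm, hx s hs, hx t ht, add_sub_add_left_eq_sub,
    intervalIntegral.integral_interval_sub_left (hGi s hs) (hGi t ht), Real.dist_eq]
  exact intervalIntegral.norm_integral_le_of_norm_le_const fun r hr =>
    hC r ((le_min ht hs).trans_lt hr.1)

theorem ae_hasDerivAt_of_eq_add_integral [CompleteSpace E] {T : ℝ}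
    (hG : IntervalIntegrable G volume 0 T) (hx : ∀ t ∈ Ioo 0 T, x t = x₀ + ∫ s in 0..t, G s) :
    ∀ᵐ t, t ∈ Ioo 0 T → HasDerivAt x (G t) t := by
  filter_upwards [hG.ae_hasDerivAt_integral] with t ht htT
  have htT' : t ∈ uIcc 0 T := by
    rw [uIcc_of_le (htT.1.trans htT.2).le]
    exact Ioo_subset_Icc_self htT
  exact ((ht htT' 0 left_mem_uIcc).const_add x₀).congr_of_eventuallyEq
    (eventually_of_mem (Ioo_mem_nhds htT.1 htT.2) hx)

end Trajectory

theorem le_integral_exp_mul_add_of_bellman {E : Type*} [NormedAddCommGroup E]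
    [InnerProductSpace ℝ E] [CompleteSpace E] {V : E → ℝ} (hV : ContDiff ℝ 1 V) {β T : ℝ}
    {K : ℝ≥0} {x G : ℝ → E} {L : ℝ → ℝ} (hT : 0 ≤ T) (hx : LipschitzOnWith K x (Icc 0 T))
    (hxG : ∀ᵐ t, t ∈ Ioo 0 T → HasDerivAt x (G t) t)
    (hL : IntervalIntegrable (fun t => Real.exp (-β * t) * L t) volume 0 T)
    (hbell : ∀ t ∈ Ioo 0 T, 0 ≤ L t - β * V (x t) + ⟪gradient V (x t), G t⟫) :
    V (x 0) ≤ (∫ t in 0..T, Real.exp (-β * t) * L t) + Real.exp (-β * T) * V (x T) := by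
  have hVx : AbsolutelyContinuousOnInterval (fun t => V (x t)) 0 T := by
    obtain ⟨KV, hKV⟩ := hV.locallyLipschitz.locallyLipschitzOn.exists_lipschitzOnWith_of_compact
      (isCompact_Icc.image_of_continuousOn hx.continuousOn)
    refine LipschitzOnWith.absolutelyContinuousOnInterval (K := KV * K) ?_
    rw [uIcc_of_le hT]
    exact hKV.comp hx (mapsTo_image _ _)
  have hψ : AbsolutelyContinuousOnInterval
      (fun t => (∫ s in 0..t, Real.exp (-β * s) * L s) + Real.exp (-β * t) * V (x t)) 0 T :=
    (hL.absolutelyContinuousOnInterval_intervalIntegral left_mem_uIcc).add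
      ((ContDiffOn.absolutelyContinuousOnInterval (by fun_prop)).fun_mul hVx)
  have := hψ.le_of_ae_hasDerivAt_nonneg hT (f' := fun t =>
    Real.exp (-β * t) * (L t - β * V (x t) + ⟪gradient V (x t), G t⟫)) ?_
  · simpa using this
  filter_upwards [hxG, hL.ae_hasDerivAt_integral] with t hxt hint ht
  refine ⟨?_, mul_nonneg (Real.exp_pos _).le (hbell t ht)⟩
  have hexp : HasDerivAt (fun t => Real.exp (-β * t)) (Real.exp (-β * t) * -β) t := by
    simpa using ((hasDerivAt_id t).const_mul (-β)).exp
  have hV' : HasDerivAt (fun t => V (x t)) ⟪gradient V (x t), G t⟫ t := by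
    rw [inner_gradient_left]
    exact (hV.differentiable one_ne_zero (x t)).hasFDerivAt.comp_hasDerivAt t (hxt ht)
  have htT : t ∈ uIcc 0 T := by
    rw [uIcc_of_le hT]
    exact Ioo_subset_Icc_self ht
  exact ((hint htT 0 left_mem_uIcc).add (hexp.mul hV')).congr_deriv (by ring)

namespace IsAdmissiblePair

variable {n m : ℕ}
  {f : EuclideanSpace ℝ (Fin n) → EuclideanSpace ℝ (Fin m) → EuclideanSpace ℝ (Fin n)}
  {X : Set (EuclideanSpace ℝ (Fin n))} {U : Set (EuclideanSpace ℝ (Fin m))}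
  {x₀ : EuclideanSpace ℝ (Fin n)} {x : ℝ → EuclideanSpace ℝ (Fin n)}
  {u : ℝ → EuclideanSpace ℝ (Fin m)} {C : ℝ≥0}

/-- The trajectory is not assumed measurable, so `∫₀ᵗ f(x,u)` might a priori be the junk value `0`;
but then `x ≡ x₀` after `t`, which makes the integrand measurable there. -/
theorem integrableOn_Ioc (h : IsAdmissiblePair f X U x₀ x u)
    (hf : Continuous fun p : EuclideanSpace ℝ (Fin n) × EuclideanSpace ℝ (Fin m) => f p.1 p.2)
    (hC : ∀ p ∈ X ×ˢ U, ‖f p.1 p.2‖ ≤ C) (t : ℝ) :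
    IntegrableOn (fun s => f (x s) (u s)) (Ioc 0 t) := by
  obtain ⟨hu, huU, hxX, hx⟩ := h
  refine integrableOn_Ioc_of_norm_le_of_not_integrableOn
    (fun s hs => hC (x s, u s) ⟨hxX s hs.le, huU s hs.le⟩) (fun t₁ ht => ?_) t
  have ht0 : 0 ≤ t₁ := not_lt.1 fun h => ht (by simp [h.le])
  have hconst : ∀ s ∈ Ioi t₁, f x₀ (u s) = f (x s) (u s) := fun s hs => by
    rw [hx s (ht0.trans hs.le), intervalIntegral.integral_undef, add_zero]
    rw [intervalIntegrable_iff_integrableOn_Ioc_of_le (ht0.trans hs.le)]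
    exact fun hs' => ht (hs'.mono_set (Ioc_subset_Ioc_right hs.le))
  exact ((hf.comp (Continuous.prodMk_right x₀)).measurable.comp hu).aestronglyMeasurable.congr
    ((ae_restrict_mem measurableSet_Ioi).mono hconst)

theorem lipschitzOnWith (h : IsAdmissiblePair f X U x₀ x u)
    (hf : Continuous fun p : EuclideanSpace ℝ (Fin n) × EuclideanSpace ℝ (Fin m) => f p.1 p.2)
    (hC : ∀ p ∈ X ×ˢ U, ‖f p.1 p.2‖ ≤ C) : LipschitzOnWith C x (Ici 0) :=
  lipschitzOnWith_Ici_of_eq_add_integral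
    (fun s hs => hC (x s, u s) ⟨h.2.2.1 s hs.le, h.2.1 s hs.le⟩) (h.integrableOn_Ioc hf hC) h.2.2.2

theorem le_trajCost (h : IsAdmissiblePair f X U x₀ x u) {β : ℝ} (hβ : 0 < β)
    (hX : IsCompact X) (hU : IsCompact U)
    {l : EuclideanSpace ℝ (Fin n) → EuclideanSpace ℝ (Fin m) → ℝ}
    (hl : Continuous fun p : EuclideanSpace ℝ (Fin n) × EuclideanSpace ℝ (Fin m) => l p.1 p.2)
    (hf : Continuous fun p : EuclideanSpace ℝ (Fin n) × EuclideanSpace ℝ (Fin m) => f p.1 p.2)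
    {V : EuclideanSpace ℝ (Fin n) → ℝ} (hV : ContDiff ℝ 1 V)
    (hbell : ∀ x ∈ X, ∀ u ∈ U, 0 ≤ l x u - β * V x + ⟪gradient V x, f x u⟫) :
    V x₀ ≤ trajCost β l x u := by
  obtain ⟨Cf, hCf⟩ := (hX.prod hU).exists_bound_of_continuousOn hf.continuousOn
  obtain ⟨Cl, hCl⟩ := (hX.prod hU).exists_bound_of_continuousOn hl.continuousOn
  obtain ⟨CV, hCV⟩ := hX.exists_bound_of_continuousOn hV.continuous.continuousOn
  have hCf' : ∀ p ∈ X ×ˢ U, ‖f p.1 p.2‖ ≤ Cf.toNNReal := fun p hp =>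
    (hCf p hp).trans (Real.le_coe_toNNReal Cf)
  have hx := h.lipschitzOnWith hf hCf'
  have hG := h.integrableOn_Ioc hf hCf'
  obtain ⟨hu, huU, hxX, hxeq⟩ := h
  have hcost : IntegrableOn (fun t => Real.exp (-β * t) * l (x t) (u t)) (Ioi 0) := by
    refine (exp_neg_integrableOn_Ioi 0 hβ).mul_bdd ?_ (ae_restrict_of_forall_mem measurableSet_Ioi
      fun t ht => hCl (x t, u t) ⟨hxX t ht.le, huU t ht.le⟩)
    exact hl.comp_aestronglyMeasurable
      (((hx.continuousOn.mono Ioi_subset_Ici_self).aestronglyMeasurable measurableSet_Ioi).prodMk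
        hu.aestronglyMeasurable)
  have hfinite : ∀ T, 0 ≤ T → V x₀ ≤
      (∫ t in 0..T, Real.exp (-β * t) * l (x t) (u t)) + Real.exp (-β * T) * V (x T) := by
    intro T hT
    have := le_integral_exp_mul_add_of_bellman hV hT (hx.mono Icc_subset_Ici_self)
      (ae_hasDerivAt_of_eq_add_integral
        ((intervalIntegrable_iff_integrableOn_Ioc_of_le hT).2 (hG T)) fun t ht => hxeq t ht.1.le)
      ((intervalIntegrable_iff_integrableOn_Ioc_of_le hT).2 (hcost.mono_set Ioc_subset_Ioi_self))
      fun t ht => hbell _ (hxX t ht.1.le) _ (huU t ht.1.le)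
    rwa [show x 0 = x₀ by simpa using hxeq 0 le_rfl] at this
  have htail : Tendsto (fun T => Real.exp (-β * T) * V (x T)) atTop (𝓝 0) :=
    (Real.tendsto_exp_atBot.comp (tendsto_id.const_mul_atTop_of_neg (neg_lt_zero.2 hβ)))
      |>.zero_mul_isBoundedUnder_le <| isBoundedUnder_of_eventually_le <|
        (eventually_ge_atTop 0).mono fun T hT => hCV _ (hxX T hT)
  have hlim := (intervalIntegral_tendsto_integral_Ioi 0 hcost tendsto_id).add htail
  rw [add_zero] at hlim
  exact ge_of_tendsto hlim ((eventually_ge_atTop 0).mono hfinite)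

end IsAdmissiblePair

/-- If `V` is `C¹` and satisfies the Bellman inequality
`l(x,u) − βV(x) + ∇V(x)·f(x,u) ≥ 0` on `X × U` (with `X, U` compact, `β > 0`, `l, f`
continuous), then for every `x₀ ∈ X` and every admissible pair `(x(·),u(·))` from `x₀` one has
`V(x₀) ≤ ∫₀^∞ e^{−βt} l(x(t),u(t)) dt`; in particular `V(x₀) ≤ V*(x₀)` on `X` (whenever an
admissible pair from `x₀` exists, `V*` being the infimum of the cost over admissible pairs). -/
theorem bellman_lower_bound (n m : ℕ) (β : ℝ) (hβ : 0 < β)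
    (X : Set (EuclideanSpace ℝ (Fin n))) (U : Set (EuclideanSpace ℝ (Fin m)))
    (hX : IsCompact X) (hU : IsCompact U)
    (l : EuclideanSpace ℝ (Fin n) → EuclideanSpace ℝ (Fin m) → ℝ)
    (f : EuclideanSpace ℝ (Fin n) → EuclideanSpace ℝ (Fin m) → EuclideanSpace ℝ (Fin n))
    (hl : Continuous fun p : EuclideanSpace ℝ (Fin n) × EuclideanSpace ℝ (Fin m) => l p.1 p.2)
    (hf : Continuous fun p : EuclideanSpace ℝ (Fin n) × EuclideanSpace ℝ (Fin m) => f p.1 p.2)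
    (V : EuclideanSpace ℝ (Fin n) → ℝ) (hV : ContDiff ℝ 1 V)
    (hbell : ∀ x ∈ X, ∀ u ∈ U, 0 ≤ l x u - β * V x + ⟪gradient V x, f x u⟫) :
    (∀ x₀ ∈ X, ∀ (x : ℝ → EuclideanSpace ℝ (Fin n)) (u : ℝ → EuclideanSpace ℝ (Fin m)),
      IsAdmissiblePair f X U x₀ x u → V x₀ ≤ trajCost β l x u) ∧
    (∀ x₀ ∈ X,
      (∃ x u, IsAdmissiblePair f X U x₀ x u) →
      V x₀ ≤ sInf {c : ℝ | ∃ x u, IsAdmissiblePair f X U x₀ x u ∧ c = trajCost β l x u}) := by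
  have hcost : ∀ x₀ ∈ X, ∀ x u, IsAdmissiblePair f X U x₀ x u → V x₀ ≤ trajCost β l x u :=
    fun _ _ _ _ h => h.le_trajCost hβ hX hU hl hf hV hbell
  refine ⟨hcost, fun x₀ hx₀ ⟨x, u, h⟩ => le_csInf ⟨_, x, u, h, rfl⟩ ?_⟩
  rintro _ ⟨x, u, h, rfl⟩
  exact hcost x₀ hx₀ x u h
end
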